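/- arXiv:2203.14881 — 4 statements merged into one kernel-verified Lean document; each statement's English description precedes it below -/
import Mathlib

section
/- Let A be a symmetric positive definite n×n real matrix and B an m×n real matrix of full row rank. Suppose there are constants 0 < cI and 0 < cb, and symmetric positive definite matrices representing norms: for all v ∈ ℝⁿ and q ∈ ℝᵐ, cI·(qᵀMq)^{1/2} ≤ sup_{v≠0} (qᵀBv)/(vᵀAv)^{1/2} and |qᵀBv| ≤ cb·(vᵀAv)^{1/2}·(qᵀMq)^{1/2}, where M is symmetric positive definite. Then the Schur complement S = B A⁻¹ Bᵀ satisfies cI² ≤ (qᵀSq)/(qᵀMq) ≤ cb² for all nonzero q ∈ ℝᵐ. -/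
open Matrix

/-! Put `w = Bᵀq` and `u = A⁻¹w`, so that `qᵀSq = wᵀA⁻¹w = uᵀAu` and `qᵀBv = uᵀAv`. Cauchy–Schwarz
for the inner product `uᵀAv` bounds every quotient `qᵀBv / √(vᵀAv)` by `√(qᵀSq)`, so the inf-sup
condition gives the lower bound; testing the boundedness bound with `v = u` gives
`qᵀSq ≤ cb √(qᵀSq) √(qᵀMq)`, which is the upper bound. -/

namespace Matrix

variable {ι : Type*} [Fintype ι]

theorem dotProduct_mul_mul_transpose_mulVec {κ R : Type*} [Fintype κ] [CommSemiring R]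
    (B : Matrix κ ι R) (C : Matrix ι ι R) (q : κ → R) :
    q ⬝ᵥ (B * C * Bᵀ) *ᵥ q = (q ᵥ* B) ⬝ᵥ C *ᵥ (q ᵥ* B) := by
  rw [← mulVec_mulVec, ← mulVec_mulVec, dotProduct_mulVec, mulVec_transpose]

theorem mulVec_nonsing_inv_mulVec {R : Type*} [DecidableEq ι] [CommRing R] (A : Matrix ι ι R)
    (h : IsUnit A.det) (w : ι → R) : A *ᵥ (A⁻¹ *ᵥ w) = w := by
  rw [mulVec_mulVec, mul_nonsing_inv A h, one_mulVec]

theorem PosSemidef.abs_dotProduct_mulVec_le {A : Matrix ι ι ℝ} (hA : A.PosSemidef)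
    (u v : ι → ℝ) : |u ⬝ᵥ A *ᵥ v| ≤ √(u ⬝ᵥ A *ᵥ u) * √(v ⬝ᵥ A *ᵥ v) := by
  let _ := A.toSeminormedAddCommGroup hA
  let _ := A.toInnerProductSpace hA
  have inner_eq (x y : ι → ℝ) : (inner ℝ x y : ℝ) = x ⬝ᵥ A *ᵥ y := by
    change (A *ᵥ y) ⬝ᵥ star x = _
    rw [star_trivial, dotProduct_comm]
  have h := real_inner_mul_inner_self_le u v
  rw [inner_eq, inner_eq, inner_eq, ← sq] at h
  have hu : 0 ≤ u ⬝ᵥ A *ᵥ u := by simpa using hA.dotProduct_mulVec_nonneg u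
  rw [← Real.sqrt_mul hu]
  exact Real.abs_le_sqrt h

variable [DecidableEq ι] {A : Matrix ι ι ℝ}

theorem PosDef.abs_dotProduct_le (hA : A.PosDef) (w v : ι → ℝ) :
    |w ⬝ᵥ v| ≤ √(w ⬝ᵥ A⁻¹ *ᵥ w) * √(v ⬝ᵥ A *ᵥ v) := by
  set u := A⁻¹ *ᵥ w
  have hAu : A *ᵥ u = w := A.mulVec_nonsing_inv_mulVec ((isUnit_iff_isUnit_det A).mp hA.isUnit) w
  have hAt : Aᵀ = A := by rw [← conjTranspose_eq_transpose_of_trivial, hA.isHermitian.eq]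
  have hwv : w ⬝ᵥ v = u ⬝ᵥ A *ᵥ v := by
    rw [← hAu, dotProduct_mulVec, ← mulVec_transpose, hAt, dotProduct_comm]
  have hwu : w ⬝ᵥ u = u ⬝ᵥ A *ᵥ u := by rw [← hAu, dotProduct_comm]
  rw [hwv, hwu]
  exact hA.posSemidef.abs_dotProduct_mulVec_le u v

theorem PosDef.iSup_dotProduct_div_sqrt_le (hA : A.PosDef) (w : ι → ℝ) :
    ⨆ v : {v : ι → ℝ // v ≠ 0}, (w ⬝ᵥ v.1) / √(v.1 ⬝ᵥ A *ᵥ v.1) ≤ √(w ⬝ᵥ A⁻¹ *ᵥ w) := by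
  refine Real.iSup_le (fun ⟨v, hv⟩ => ?_) (Real.sqrt_nonneg _)
  have hvA : 0 < v ⬝ᵥ A *ᵥ v := by simpa using hA.dotProduct_mulVec_pos hv
  rw [div_le_iff₀ (Real.sqrt_pos.2 hvA)]
  exact (le_abs_self _).trans (hA.abs_dotProduct_le w v)

theorem PosDef.dotProduct_inv_mulVec_le_sq (hA : A.PosDef) {w : ι → ℝ} {K : ℝ}
    (h : ∀ v, w ⬝ᵥ v ≤ K * √(v ⬝ᵥ A *ᵥ v)) : w ⬝ᵥ A⁻¹ *ᵥ w ≤ K ^ 2 := by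
  set u := A⁻¹ *ᵥ w
  have hAu : A *ᵥ u = w := A.mulVec_nonsing_inv_mulVec ((isUnit_iff_isUnit_det A).mp hA.isUnit) w
  have hs : 0 ≤ w ⬝ᵥ u := by simpa using hA.inv.posSemidef.dotProduct_mulVec_nonneg w
  have hsu : w ⬝ᵥ u ≤ K * √(w ⬝ᵥ u) := by
    simpa only [← hAu, dotProduct_comm u] using h u
  nlinarith [Real.sq_sqrt hs, Real.sqrt_nonneg (w ⬝ᵥ u), sq_nonneg (K - √(w ⬝ᵥ u))]

end Matrix

theorem schur_spectral_equivalence_general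
    {n m : ℕ}
    (A : Matrix (Fin n) (Fin n) ℝ) (hA : A.PosDef)
    (B : Matrix (Fin m) (Fin n) ℝ)
    (M : Matrix (Fin m) (Fin m) ℝ) (hM : M.PosDef)
    (cI cb : ℝ) (hcI : 0 < cI)
    (hinf : ∀ q : Fin m → ℝ,
      cI * Real.sqrt (q ⬝ᵥ M.mulVec q) ≤
        ⨆ v : {v : Fin n → ℝ // v ≠ 0},
          (q ⬝ᵥ B.mulVec v.1) / Real.sqrt (v.1 ⬝ᵥ A.mulVec v.1))
    (hbd : ∀ (v : Fin n → ℝ) (q : Fin m → ℝ),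
      |q ⬝ᵥ B.mulVec v| ≤
        cb * Real.sqrt (v ⬝ᵥ A.mulVec v) * Real.sqrt (q ⬝ᵥ M.mulVec q)) :
    ∀ q : Fin m → ℝ, q ≠ 0 →
      cI ^ 2 ≤ (q ⬝ᵥ (B * A⁻¹ * Bᵀ).mulVec q) / (q ⬝ᵥ M.mulVec q) ∧
      (q ⬝ᵥ (B * A⁻¹ * Bᵀ).mulVec q) / (q ⬝ᵥ M.mulVec q) ≤ cb ^ 2 := by
  intro q hq
  have hMq : 0 < q ⬝ᵥ M *ᵥ q := by simpa using hM.dotProduct_mulVec_pos hq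
  have hqM := Real.sq_sqrt hMq.le
  rw [le_div_iff₀ hMq, div_le_iff₀ hMq, dotProduct_mul_mul_transpose_mulVec]
  have hinf_q := hinf q
  have hbd_q (v) := hbd v q
  simp only [dotProduct_mulVec q B] at hinf_q hbd_q
  constructor
  · have hsup := hinf_q.trans (hA.iSup_dotProduct_div_sqrt_le (q ᵥ* B))
    rwa [Real.le_sqrt' (mul_pos hcI (Real.sqrt_pos.2 hMq)), mul_pow, hqM] at hsup
  · have hupper := hA.dotProduct_inv_mulVec_le_sq (K := cb * √(q ⬝ᵥ M *ᵥ q)) fun v =>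
      (le_abs_self _).trans ((hbd_q v).trans_eq (by ring))
    rwa [mul_pow, hqM] at hupper

/-- Spectral equivalence of the Schur complement `S = B A⁻¹ Bᵀ` with the norm
matrix `M`, given an inf-sup condition and a boundedness bound. -/
theorem schur_spectral_equivalence
    {n m : ℕ}
    (A : Matrix (Fin n) (Fin n) ℝ) (hA : A.PosDef)
    (B : Matrix (Fin m) (Fin n) ℝ) (hB : B.rank = m)
    (M : Matrix (Fin m) (Fin m) ℝ) (hM : M.PosDef)
    (cI cb : ℝ) (hcI : 0 < cI) (hcb : 0 < cb)
    (hinf : ∀ q : Fin m → ℝ,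
      cI * Real.sqrt (q ⬝ᵥ M.mulVec q) ≤
        ⨆ v : {v : Fin n → ℝ // v ≠ 0},
          (q ⬝ᵥ B.mulVec v.1) / Real.sqrt (v.1 ⬝ᵥ A.mulVec v.1))
    (hbd : ∀ (v : Fin n → ℝ) (q : Fin m → ℝ),
      |q ⬝ᵥ B.mulVec v| ≤
        cb * Real.sqrt (v ⬝ᵥ A.mulVec v) * Real.sqrt (q ⬝ᵥ M.mulVec q)) :
    ∀ q : Fin m → ℝ, q ≠ 0 →
      cI ^ 2 ≤ (q ⬝ᵥ (B * A⁻¹ * Bᵀ).mulVec q) / (q ⬝ᵥ M.mulVec q) ∧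
      (q ⬝ᵥ (B * A⁻¹ * Bᵀ).mulVec q) / (q ⬝ᵥ M.mulVec q) ≤ cb ^ 2 :=
  schur_spectral_equivalence_general A hA B M hM cI cb hcI hinf hbd
end

section
/- Let a : V × V → ℝ be a symmetric bilinear form on a finite-dimensional real normed space V that is coercive and bounded: α‖v‖² ≤ a(v,v) and |a(u,v)| ≤ c_a‖u‖‖v‖ for all u,v, with 0 < α ≤ c_a. Let b : Q × V → ℝ be bilinear with |b(q,v)| ≤ c_b‖v‖·N(q) and c_I·N(q) ≤ sup_{v≠0} b(q,v)/‖v‖ for all q, where N is a norm on the finite-dimensional space Q. Then for all q ∈ Q, (c_I/√c_a)·N(q) ≤ sup_{v≠0} b(q,v)/a(v,v)^{1/2} ≤ (c_b/√α)·N(q). -/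
/-- Core inequality of Lemma 3.1: replacing the norm on `V` by the energy norm
`a(v,v)^{1/2}` changes the inf-sup and boundedness constants by `1/√c_a` and
`1/√α` respectively. -/
theorem energy_norm_inf_sup
    {V Q : Type*}
    [NormedAddCommGroup V] [NormedSpace ℝ V] [FiniteDimensional ℝ V]
    [NormedAddCommGroup Q] [NormedSpace ℝ Q] [FiniteDimensional ℝ Q]
    (a : V →ₗ[ℝ] V →ₗ[ℝ] ℝ) (b : Q →ₗ[ℝ] V →ₗ[ℝ] ℝ)
    (α c_a c_b c_I : ℝ) (hα : 0 < α) (hac : α ≤ c_a)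
    (hcb : 0 < c_b) (hcI : 0 < c_I)
    (hsym : ∀ u v : V, a u v = a v u)
    (hcoer : ∀ v : V, α * ‖v‖ ^ 2 ≤ a v v)
    (habd : ∀ u v : V, |a u v| ≤ c_a * ‖u‖ * ‖v‖)
    (hbbd : ∀ (q : Q) (v : V), |b q v| ≤ c_b * ‖v‖ * ‖q‖)
    (hinf : ∀ q : Q, c_I * ‖q‖ ≤ ⨆ v : {v : V // v ≠ 0}, b q v.1 / ‖v.1‖) :
    ∀ q : Q,
      (c_I / Real.sqrt c_a) * ‖q‖ ≤
        (⨆ v : {v : V // v ≠ 0}, b q v.1 / Real.sqrt (a v.1 v.1)) ∧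
      (⨆ v : {v : V // v ≠ 0}, b q v.1 / Real.sqrt (a v.1 v.1)) ≤
        (c_b / Real.sqrt α) * ‖q‖ := by
  intro q
  have hca : (0:ℝ) < c_a := lt_of_lt_of_le hα hac
  have hsa : (0:ℝ) < Real.sqrt α := Real.sqrt_pos.mpr hα
  have hsca : (0:ℝ) < Real.sqrt c_a := Real.sqrt_pos.mpr hca
  have hapos : ∀ v : V, v ≠ 0 → 0 < a v v := fun v hv => by
    have h := hcoer v
    have hn : 0 < ‖v‖ := norm_pos_iff.mpr hv
    nlinarith [mul_pos hα (pow_pos hn 2)]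
  have hlow : ∀ v : V, Real.sqrt α * ‖v‖ ≤ Real.sqrt (a v v) := fun v => by
    have := hcoer v
    calc Real.sqrt α * ‖v‖ = Real.sqrt (α * ‖v‖ ^ 2) := by
          rw [Real.sqrt_mul hα.le, Real.sqrt_sq (norm_nonneg v)]
      _ ≤ Real.sqrt (a v v) := Real.sqrt_le_sqrt this
  have hhigh : ∀ v : V, Real.sqrt (a v v) ≤ Real.sqrt c_a * ‖v‖ := fun v => by
    have h1 : a v v ≤ c_a * ‖v‖ ^ 2 := by
      have := habd v v; have := le_abs_self (a v v); nlinarith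
    calc Real.sqrt (a v v) ≤ Real.sqrt (c_a * ‖v‖ ^ 2) := Real.sqrt_le_sqrt h1
      _ = Real.sqrt c_a * ‖v‖ := by
          rw [Real.sqrt_mul hca.le, Real.sqrt_sq (norm_nonneg v)]
  have hub : ∀ v : {v : V // v ≠ 0},
      b q v.1 / Real.sqrt (a v.1 v.1) ≤ (c_b / Real.sqrt α) * ‖q‖ := by
    rintro ⟨v, hv⟩
    have hn : 0 < ‖v‖ := norm_pos_iff.mpr hv
    have hd : 0 < Real.sqrt α * ‖v‖ := by positivity
    have h1 : b q v ≤ c_b * ‖v‖ * ‖q‖ := le_trans (le_abs_self _) (hbbd q v)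
    have h2 : b q v / Real.sqrt (a v v) ≤ (c_b * ‖v‖ * ‖q‖) / (Real.sqrt α * ‖v‖) :=
      div_le_div₀ (by positivity) h1 hd (hlow v)
    calc b q v / Real.sqrt (a v v) ≤ (c_b * ‖v‖ * ‖q‖) / (Real.sqrt α * ‖v‖) := h2
      _ = (c_b / Real.sqrt α) * ‖q‖ := by field_simp
  by_cases hne : Nonempty {v : V // v ≠ 0}
  · have hbdd : BddAbove (Set.range fun v : {v : V // v ≠ 0} =>
        b q v.1 / Real.sqrt (a v.1 v.1)) :=
      ⟨(c_b / Real.sqrt α) * ‖q‖, by rintro _ ⟨v, rfl⟩; exact hub v⟩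
    set S2 := ⨆ v : {v : V // v ≠ 0}, b q v.1 / Real.sqrt (a v.1 v.1) with hS2
    have hmem : ∀ v : {v : V // v ≠ 0}, b q v.1 / Real.sqrt (a v.1 v.1) ≤ S2 :=
      fun v => le_ciSup hbdd v
    have hmemneg : ∀ v : V, (hv : v ≠ 0) → -(b q v) / Real.sqrt (a v v) ≤ S2 := by
      intro v hv
      have hv' : (-v : V) ≠ 0 := neg_ne_zero.mpr hv
      have h := hmem ⟨-v, hv'⟩
      have e1 : b q (-v) = -(b q v) := by simp
      have e2 : a (-v) (-v) = a v v := by simp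
      simpa [e1, e2] using h
    have hS2nn : 0 ≤ S2 := by
      obtain ⟨v⟩ := hne
      rcases le_or_gt 0 (b q v.1) with h | h
      · exact le_trans (by positivity) (hmem v)
      · exact le_trans (div_nonneg (by linarith) (Real.sqrt_nonneg _)) (hmemneg v.1 v.2)
    constructor
    · have key : (⨆ v : {v : V // v ≠ 0}, b q v.1 / ‖v.1‖) ≤ Real.sqrt c_a * S2 := by
        apply ciSup_le
        rintro ⟨v, hv⟩
        have hn : 0 < ‖v‖ := norm_pos_iff.mpr hv
        have hpos : 0 < Real.sqrt (a v v) := Real.sqrt_pos.mpr (hapos v hv)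
        rcases le_or_gt 0 (b q v) with h | h
        · have h1 : b q v / ‖v‖ ≤ Real.sqrt c_a * (b q v / Real.sqrt (a v v)) := by
            rw [mul_div_assoc']
            have : b q v / ‖v‖ = (Real.sqrt c_a * b q v) / (Real.sqrt c_a * ‖v‖) := by
              rw [mul_div_mul_left _ _ hsca.ne']
            rw [this]
            exact div_le_div_of_nonneg_left (by positivity) hpos (hhigh v)
          exact h1.trans (mul_le_mul_of_nonneg_left (hmem ⟨v, hv⟩) hsca.le)
        · have h1 : b q v / ‖v‖ ≤ 0 := div_nonpos_iff.mpr (Or.inr ⟨h.le, hn.le⟩)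
          exact h1.trans (by positivity)
      have h2 : c_I * ‖q‖ ≤ Real.sqrt c_a * S2 := (hinf q).trans key
      rw [div_mul_eq_mul_div, div_le_iff₀ hsca]
      linarith [h2]
    · exact ciSup_le hub
  · have he : IsEmpty {v : V // v ≠ 0} := not_nonempty_iff.mp hne
    have h0 : (⨆ v : {v : V // v ≠ 0}, b q v.1 / Real.sqrt (a v.1 v.1)) = 0 := by
      exact Real.iSup_of_isEmpty _
    have h0' : (⨆ v : {v : V // v ≠ 0}, b q v.1 / ‖v.1‖) = 0 := by
      exact Real.iSup_of_isEmpty _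
    have hq : ‖q‖ = 0 := by
      have := hinf q; rw [h0'] at this
      nlinarith [norm_nonneg q]
    rw [h0, hq]; norm_num
end

section
/- Let 𝔸 = [[A, 𝓑ᵀ],[𝓑, 0]] be a saddle-point matrix where A ∈ ℝ^{n×n} is symmetric positive definite and 𝓑 ∈ ℝ^{m×n} has full row rank. Let ℙ = blockdiag(A, 𝓜) where 𝓜 ∈ ℝ^{m×m} is symmetric positive definite and spectrally equivalent to the Schur complement S = 𝓑A⁻¹𝓑ᵀ with constants 0 < γ ≤ xᵀSx/xᵀ𝓜x ≤ Γ. Then every eigenvalue ρ of ℙ⁻¹𝔸 satisfies ρ ∈ [−c₁, −c₂] ∪ [c₃, c₄], where the positive constants c₁, c₂, c₃, c₄ depend only on γ and Γ; in particular 0 is not an eigenvalue. -/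
/-!
Writing an eigenvector of `ℙ⁻¹𝔸` as `(u, v)`, the eigen-equation reads `Au + 𝓑ᵀv = ρAu` and
`𝓑u = ρ𝓜v`. If `v = 0` then `ρ = 1`. Otherwise the first equation gives `A⁻¹𝓑ᵀv = (ρ - 1)u`, hence
`𝓑A⁻¹𝓑ᵀv = ρ(ρ - 1)𝓜v`, so `ρ(ρ - 1)` is a generalized Rayleigh quotient of the Schur complement
and lies in `[γ, Γ]`. Solving the quadratic inequalities places `ρ` in
`[(1 - √(1 + 4Γ))/2, (1 - √(1 + 4γ))/2] ∪ [1, (1 + √(1 + 4Γ))/2]`.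
-/

open Matrix

namespace Matrix

variable {ι κ R : Type*} [Fintype ι] [Fintype κ] [CommRing R]

theorem mulVec_eq_smul_mulVec_of_nonsing_inv_mul_mulVec [DecidableEq ι] {P K : Matrix ι ι R}
    (hP : IsUnit P.det) {ρ : R} {x : ι → R} (h : (P⁻¹ * K) *ᵥ x = ρ • x) :
    K *ᵥ x = ρ • P *ᵥ x := by
  rw [← mulVec_smul, ← h, mulVec_mulVec, ← Matrix.mul_assoc, mul_nonsing_inv P hP, Matrix.one_mul]

theorem fromBlocks_saddlePoint_mulVec_eq_smul_iff (A : Matrix ι ι R) (B : Matrix κ ι R)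
    (M : Matrix κ κ R) (ρ : R) (u : ι → R) (v : κ → R) :
    fromBlocks A Bᵀ B 0 *ᵥ Sum.elim u v = ρ • fromBlocks A 0 0 M *ᵥ Sum.elim u v ↔
      A *ᵥ u + Bᵀ *ᵥ v = ρ • A *ᵥ u ∧ B *ᵥ u = ρ • M *ᵥ v := by
  simp [fromBlocks_mulVec, funext_iff, Sum.forall]

theorem schur_mulVec_eq_smul_of_saddlePoint_eigen [DecidableEq ι] {A : Matrix ι ι R}
    (hA : IsUnit A.det) {B : Matrix κ ι R} {M : Matrix κ κ R} {ρ : R} {u : ι → R} {v : κ → R}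
    (h₁ : A *ᵥ u + Bᵀ *ᵥ v = ρ • A *ᵥ u) (h₂ : B *ᵥ u = ρ • M *ᵥ v) :
    (B * A⁻¹ * Bᵀ) *ᵥ v = (ρ * (ρ - 1)) • M *ᵥ v := by
  have hBv : Bᵀ *ᵥ v = (ρ - 1) • A *ᵥ u := by
    rw [sub_smul, one_smul, ← h₁, add_sub_cancel_left]
  have hAinv : A⁻¹ *ᵥ (Bᵀ *ᵥ v) = (ρ - 1) • u := by
    rw [hBv, mulVec_smul, mulVec_mulVec, nonsing_inv_mul A hA, one_mulVec]
  rw [Matrix.mul_assoc, ← mulVec_mulVec, ← mulVec_mulVec, hAinv, mulVec_smul, h₂, smul_smul,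
    mul_comm]

theorem dotProduct_mulVec_div_eq_of_mulVec_eq_smul {K : Type*} [Field K] {S M : Matrix κ κ K}
    {v : κ → K} {t : K} (h : S *ᵥ v = t • M *ᵥ v) (hv : v ⬝ᵥ M *ᵥ v ≠ 0) :
    v ⬝ᵥ S *ᵥ v / v ⬝ᵥ M *ᵥ v = t := by
  rw [h, dotProduct_smul, smul_eq_mul, mul_div_assoc, div_self hv, mul_one]

end Matrix

theorem mem_Icc_union_Icc_of_mul_sub_one_mem_Icc {γ Γ ρ : ℝ} (h : ρ * (ρ - 1) ∈ Set.Icc γ Γ) :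
    ρ ∈ Set.Icc ((1 - √(1 + 4 * Γ)) / 2) ((1 - √(1 + 4 * γ)) / 2) ∪
      Set.Icc ((1 + √(1 + 4 * γ)) / 2) ((1 + √(1 + 4 * Γ)) / 2) := by
  have habs : |2 * ρ - 1| = √(1 + 4 * (ρ * (ρ - 1))) := by
    rw [← Real.sqrt_sq_eq_abs]; ring_nf
  have hlo : √(1 + 4 * γ) ≤ |2 * ρ - 1| := habs ▸ Real.sqrt_le_sqrt (by linarith [h.1])
  have hhi : |2 * ρ - 1| ≤ √(1 + 4 * Γ) := habs ▸ Real.sqrt_le_sqrt (by linarith [h.2])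
  rcases abs_cases (2 * ρ - 1) with ⟨hpos, -⟩ | ⟨hneg, -⟩
  · exact Or.inr ⟨by linarith, by linarith⟩
  · exact Or.inl ⟨by linarith, by linarith⟩

theorem block_diagonal_preconditioner_eigenvalues_general
    {n m : ℕ}
    (A : Matrix (Fin n) (Fin n) ℝ) (hA : A.PosDef)
    (𝓑 : Matrix (Fin m) (Fin n) ℝ)
    (𝓜 : Matrix (Fin m) (Fin m) ℝ) (h𝓜 : 𝓜.PosDef)
    (γ Γ : ℝ) (hγ : 0 < γ) (hγΓ : γ ≤ Γ)
    (hlow : ∀ x : Fin m → ℝ, x ≠ 0 →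
      γ ≤ (x ⬝ᵥ (𝓑 * A⁻¹ * 𝓑ᵀ).mulVec x) / (x ⬝ᵥ 𝓜.mulVec x))
    (hup : ∀ x : Fin m → ℝ, x ≠ 0 →
      (x ⬝ᵥ (𝓑 * A⁻¹ * 𝓑ᵀ).mulVec x) / (x ⬝ᵥ 𝓜.mulVec x) ≤ Γ) :
    ∃ c₁ c₂ c₃ c₄ : ℝ, 0 < c₂ ∧ c₂ ≤ c₁ ∧ 0 < c₃ ∧ c₃ ≤ c₄ ∧
      ∀ (ρ : ℝ) (x : Fin n ⊕ Fin m → ℝ), x ≠ 0 →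
        ((fromBlocks A 0 0 𝓜)⁻¹ * fromBlocks A 𝓑ᵀ 𝓑 0).mulVec x = ρ • x →
        ρ ∈ Set.Icc (-c₁) (-c₂) ∪ Set.Icc c₃ c₄ := by
  have hsqrtγ : 1 < √(1 + 4 * γ) := (Real.lt_sqrt zero_le_one).2 (by linarith)
  have hsqrtΓ : √(1 + 4 * γ) ≤ √(1 + 4 * Γ) := Real.sqrt_le_sqrt (by linarith)
  refine ⟨(√(1 + 4 * Γ) - 1) / 2, (√(1 + 4 * γ) - 1) / 2, 1, (1 + √(1 + 4 * Γ)) / 2,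
    by linarith, by linarith, one_pos, by linarith, fun ρ x hx hρ => ?_⟩
  have hP : IsUnit (fromBlocks A 0 0 𝓜).det := by
    rw [det_fromBlocks_zero₂₁]
    exact (mul_pos hA.det_pos h𝓜.det_pos).ne'.isUnit
  rw [← Sum.elim_comp_inl_inr x] at hx hρ
  obtain ⟨h₁, h₂⟩ := (fromBlocks_saddlePoint_mulVec_eq_smul_iff A 𝓑 𝓜 ρ _ _).1
    (mulVec_eq_smul_mulVec_of_nonsing_inv_mul_mulVec hP hρ)
  set u := x ∘ Sum.inl
  set v := x ∘ Sum.inr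
  by_cases hv : v = 0
  · have hu : u ≠ 0 := by rintro hu; exact hx (by rw [hu, hv, Sum.elim_zero_zero])
    have hAu : A *ᵥ u ≠ 0 := fun h0 => by simpa [h0] using hA.dotProduct_mulVec_pos hu
    have hρ1 : ρ = 1 := smul_left_injective ℝ hAu <| by simpa [hv] using h₁.symm
    exact Or.inr ⟨hρ1.ge, by linarith⟩
  · have hR := dotProduct_mulVec_div_eq_of_mulVec_eq_smul
      (schur_mulVec_eq_smul_of_saddlePoint_eigen hA.det_pos.ne'.isUnit h₁ h₂)
      (h𝓜.dotProduct_mulVec_pos hv).ne'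
    rcases mem_Icc_union_Icc_of_mul_sub_one_mem_Icc ⟨hR ▸ hlow v hv, hR ▸ hup v hv⟩ with h | h
    · exact Or.inl ⟨by linarith [h.1], by linarith [h.2]⟩
    · exact Or.inr ⟨by linarith [h.1], h.2⟩

/-- Block-diagonal preconditioning of a symmetric saddle-point matrix: if `𝓜`
is spectrally equivalent to the Schur complement `𝓑A⁻¹𝓑ᵀ` with constants
`γ ≤ Γ`, then all eigenvalues of `ℙ⁻¹𝔸` lie in `[-c₁,-c₂] ∪ [c₃,c₄]` with
positive constants depending only on `γ` and `Γ`; in particular `0` is not an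
eigenvalue. -/
theorem block_diagonal_preconditioner_eigenvalues
    {n m : ℕ}
    (A : Matrix (Fin n) (Fin n) ℝ) (hA : A.PosDef)
    (𝓑 : Matrix (Fin m) (Fin n) ℝ) (h𝓑 : 𝓑.rank = m)
    (𝓜 : Matrix (Fin m) (Fin m) ℝ) (h𝓜 : 𝓜.PosDef)
    (γ Γ : ℝ) (hγ : 0 < γ) (hγΓ : γ ≤ Γ)
    (hlow : ∀ x : Fin m → ℝ, x ≠ 0 →
      γ ≤ (x ⬝ᵥ (𝓑 * A⁻¹ * 𝓑ᵀ).mulVec x) / (x ⬝ᵥ 𝓜.mulVec x))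
    (hup : ∀ x : Fin m → ℝ, x ≠ 0 →
      (x ⬝ᵥ (𝓑 * A⁻¹ * 𝓑ᵀ).mulVec x) / (x ⬝ᵥ 𝓜.mulVec x) ≤ Γ) :
    ∃ c₁ c₂ c₃ c₄ : ℝ, 0 < c₂ ∧ c₂ ≤ c₁ ∧ 0 < c₃ ∧ c₃ ≤ c₄ ∧
      ∀ (ρ : ℝ) (x : Fin n ⊕ Fin m → ℝ), x ≠ 0 →
        ((fromBlocks A 0 0 𝓜)⁻¹ * fromBlocks A 𝓑ᵀ 𝓑 0).mulVec x = ρ • x →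
        ρ ∈ Set.Icc (-c₁) (-c₂) ∪ Set.Icc c₃ c₄ :=
  block_diagonal_preconditioner_eigenvalues_general A hA 𝓑 𝓜 h𝓜 γ Γ hγ hγΓ hlow hup
end

section
/- Let A be symmetric positive definite n×n and 𝓑 an m×n matrix of full row rank, and consider the saddle-point matrix 𝔸 = [[A, 𝓑ᵀ],[𝓑, 0]]. If ℙ = blockdiag(A, S) with S = 𝓑A⁻¹𝓑ᵀ the exact Schur complement, then the eigenvalues of ℙ⁻¹𝔸 are exactly 1, (1+√5)/2, and (1−√5)/2. -/
/-!
Write the eigenproblem `ℙ⁻¹𝔸 x = ρ x` as `𝔸 x = ρ ℙ x` and split `x = (u, v)`: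
`A u + 𝓑ᵀ v = ρ A u` and `𝓑 u = ρ S v`. For `ρ ≠ 1` the first equation gives
`𝓑ᵀ v = (ρ - 1) A u`, hence `S v = (ρ - 1) 𝓑 u = (ρ - 1) ρ S v`; since `S` is invertible and
`v ≠ 0`, `ρ² = ρ + 1`. Conversely `ρ = 1` is attained at `(u, 0)` with `0 ≠ u ∈ ker 𝓑`
(which exists as `m < n`), and each root of `ρ² = ρ + 1` at `(ρ A⁻¹𝓑ᵀ v, v)` for any `v ≠ 0`.
-/

open Matrix

namespace Sum

variable {α β γ : Type*}

theorem elim_eq_elim_iff {u u' : α → γ} {v v' : β → γ} :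
    Sum.elim u v = Sum.elim u' v' ↔ u = u' ∧ v = v' :=
  ⟨fun h ↦ ⟨congrArg (· ∘ inl) h, congrArg (· ∘ inr) h⟩, by rintro ⟨rfl, rfl⟩; rfl⟩

theorem elim_eq_zero_iff [Zero γ] {u : α → γ} {v : β → γ} :
    Sum.elim u v = 0 ↔ u = 0 ∧ v = 0 := by
  rw [← elim_zero_zero, elim_eq_elim_iff]

theorem smul_elim {R : Type*} [SMul R γ] (c : R) (u : α → γ) (v : β → γ) :
    c • Sum.elim u v = Sum.elim (c • u) (c • v) :=
  Sum.comp_elim _ _ _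

end Sum

namespace Real
open goldenRatio

theorem setOf_sq_eq_add_one : {x : ℝ | x ^ 2 = x + 1} = {φ, ψ} := by
  ext x
  simp only [Set.mem_ofPred_eq, Set.mem_insert_iff, Set.mem_singleton_iff]
  constructor
  · intro h
    have : (x - φ) * (x - ψ) = 0 := by
      linear_combination h - x * goldenRatio_add_goldenConj + goldenRatio_mul_goldenConj
    simpa [sub_eq_zero] using this
  · rintro (rfl | rfl)
    exacts [goldenRatio_sq, goldenConj_sq]

end Real

namespace Matrix

variable {K m n : Type*} [Field K] [Fintype m] [Fintype n]

theorem exists_mulVec_eq_zero_of_card_lt (B : Matrix m n K)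
    (h : Fintype.card m < Fintype.card n) : ∃ u ≠ 0, B *ᵥ u = 0 := by
  obtain ⟨u, hu, hu0⟩ := Submodule.exists_mem_ne_zero_of_ne_bot
    (LinearMap.ker_ne_bot_of_finrank_lt (f := B.mulVecLin) (by simpa using h))
  exact ⟨u, hu0, hu⟩

theorem vecMul_injective_of_rank_eq_card {B : Matrix m n K} (h : B.rank = Fintype.card m) :
    Function.Injective B.vecMul := by
  rw [vecMul_injective_iff, linearIndependent_iff_card_eq_finrank_span, Set.finrank,
    ← rank_eq_finrank_span_row, h]

theorem PosDef.mul_inv_mul_transpose [DecidableEq n] {A : Matrix n n ℝ} (hA : A.PosDef)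
    {B : Matrix m n ℝ} (hB : B.rank = Fintype.card m) : (B * A⁻¹ * Bᵀ).PosDef := by
  simpa using hA.inv.mul_mul_conjTranspose_same (vecMul_injective_of_rank_eq_card hB)

theorem inv_mul_mulVec_eq_smul_iff {R : Type*} [CommRing R] [DecidableEq n] {P : Matrix n n R}
    (hP : IsUnit P.det) (M : Matrix n n R) (c : R) (x : n → R) :
    (P⁻¹ * M) *ᵥ x = c • x ↔ M *ᵥ x = c • (P *ᵥ x) := by
  rw [← (mulVec_injective_of_isUnit ((isUnit_iff_isUnit_det P).mpr hP)).eq_iff, mulVec_mulVec,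
    mul_nonsing_inv_cancel_left _ _ hP, mulVec_smul]

section SaddlePoint

variable (A : Matrix n n K) (B : Matrix m n K)

theorem fromBlocks_mulVec_eq_smul_fromBlocks_mulVec_iff (S : Matrix m m K) (ρ : K)
    (u : n → K) (v : m → K) :
    fromBlocks A Bᵀ B 0 *ᵥ Sum.elim u v = ρ • (fromBlocks A 0 0 S *ᵥ Sum.elim u v) ↔
      A *ᵥ u + Bᵀ *ᵥ v = ρ • (A *ᵥ u) ∧ B *ᵥ u = ρ • (S *ᵥ v) := by
  simp only [fromBlocks_mulVec, Sum.elim_comp_inl, Sum.elim_comp_inr, zero_mulVec,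
    add_zero, zero_add, Sum.smul_elim, Sum.elim_eq_elim_iff]

variable {A B} [DecidableEq n]

theorem saddlePoint_eigen_of_sq_eq_add_one (hA : IsUnit A.det) {ρ : K} (hρ : ρ ^ 2 = ρ + 1)
    (v : m → K) :
    fromBlocks A Bᵀ B 0 *ᵥ Sum.elim (ρ • (A⁻¹ * Bᵀ) *ᵥ v) v =
      ρ • (fromBlocks A 0 0 (B * A⁻¹ * Bᵀ) *ᵥ Sum.elim (ρ • (A⁻¹ * Bᵀ) *ᵥ v) v) := by
  rw [fromBlocks_mulVec_eq_smul_fromBlocks_mulVec_iff]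
  constructor
  · rw [mulVec_smul, mulVec_mulVec, mul_nonsing_inv_cancel_left _ _ hA, smul_smul, ← sq, hρ,
      add_smul, one_smul]
  · rw [mulVec_smul, mulVec_mulVec, Matrix.mul_assoc]

variable [DecidableEq m]

theorem sq_eq_add_one_of_saddlePoint_eigen (hA : IsUnit A.det) (hS : IsUnit (B * A⁻¹ * Bᵀ).det)
    {ρ : K} (hρ : ρ ≠ 1) {u : n → K} {v : m → K} (huv : Sum.elim u v ≠ 0)
    (h₁ : A *ᵥ u + Bᵀ *ᵥ v = ρ • (A *ᵥ u)) (h₂ : B *ᵥ u = ρ • ((B * A⁻¹ * Bᵀ) *ᵥ v)) :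
    ρ ^ 2 = ρ + 1 := by
  have hρ₁ : ρ - 1 ≠ 0 := sub_ne_zero.mpr hρ
  have hBv : Bᵀ *ᵥ v = (ρ - 1) • (A *ᵥ u) := by
    rw [sub_smul, one_smul, ← h₁]
    abel
  have hSv : (B * A⁻¹ * Bᵀ) *ᵥ v = (ρ - 1) • (B *ᵥ u) := by
    rw [← mulVec_mulVec, ← mulVec_mulVec, hBv, mulVec_smul, mulVec_mulVec,
      nonsing_inv_mul _ hA, one_mulVec, mulVec_smul]
  have hv : v ≠ 0 := by
    rintro rfl
    have hu : u = 0 := by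
      rw [mulVec_zero, eq_comm, smul_eq_zero, or_iff_right hρ₁] at hBv
      exact mulVec_injective_of_isUnit ((isUnit_iff_isUnit_det A).mpr hA)
        (hBv.trans (mulVec_zero A).symm)
    exact huv (Sum.elim_eq_zero_iff.mpr ⟨hu, rfl⟩)
  have hSv₀ : (B * A⁻¹ * Bᵀ) *ᵥ v ≠ 0 := fun h ↦ hv <|
    mulVec_injective_of_isUnit ((isUnit_iff_isUnit_det _).mpr hS) (h.trans (mulVec_zero _).symm)
  have hquad : ((ρ - 1) * ρ - 1) • ((B * A⁻¹ * Bᵀ) *ᵥ v) = 0 := by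
    rw [sub_smul, mul_smul, ← h₂, ← hSv, one_smul, sub_self]
  linear_combination (smul_eq_zero.mp hquad).resolve_right hSv₀

theorem setOf_saddlePoint_eigen_eq [Nonempty m] (hA : IsUnit A.det)
    (hS : IsUnit (B * A⁻¹ * Bᵀ).det) (hB : ∃ u ≠ 0, B *ᵥ u = 0) :
    {ρ : K | ∃ x, x ≠ 0 ∧
        fromBlocks A Bᵀ B 0 *ᵥ x = ρ • (fromBlocks A 0 0 (B * A⁻¹ * Bᵀ) *ᵥ x)} =
      insert 1 {ρ | ρ ^ 2 = ρ + 1} := by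
  ext ρ
  simp only [Set.mem_ofPred_eq, Set.mem_insert_iff]
  constructor
  · rintro ⟨x, hx, h⟩
    rw [← Sum.elim_comp_inl_inr x, fromBlocks_mulVec_eq_smul_fromBlocks_mulVec_iff] at h
    rw [← Sum.elim_comp_inl_inr x] at hx
    exact or_iff_not_imp_left.mpr fun hρ ↦ sq_eq_add_one_of_saddlePoint_eigen hA hS hρ hx h.1 h.2
  · rintro (rfl | hρ)
    · obtain ⟨u, hu, hBu⟩ := hB
      refine ⟨Sum.elim u 0, fun h ↦ hu (Sum.elim_eq_zero_iff.mp h).1, ?_⟩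
      rw [fromBlocks_mulVec_eq_smul_fromBlocks_mulVec_iff]
      simp [hBu]
    · obtain ⟨v, hv⟩ := exists_ne (0 : m → K)
      exact ⟨_, fun h ↦ hv (Sum.elim_eq_zero_iff.mp h).2,
        saddlePoint_eigen_of_sq_eq_add_one hA hρ v⟩

end SaddlePoint

end Matrix

/-- Ideal block-diagonal preconditioning: with the exact Schur complement
`S = 𝓑A⁻¹𝓑ᵀ`, the eigenvalues of `ℙ⁻¹𝔸` are exactly `1`, `(1+√5)/2`, and
`(1−√5)/2` (with `n > m ≥ 1`). -/
theorem ideal_schur_preconditioner_eigenvalues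
    {n m : ℕ} (hm : 0 < m) (hnm : m < n)
    (A : Matrix (Fin n) (Fin n) ℝ) (hA : A.PosDef)
    (𝓑 : Matrix (Fin m) (Fin n) ℝ) (h𝓑 : 𝓑.rank = m) :
    {ρ : ℝ | ∃ x : Fin n ⊕ Fin m → ℝ, x ≠ 0 ∧
        ((fromBlocks A 0 0 (𝓑 * A⁻¹ * 𝓑ᵀ))⁻¹ * fromBlocks A 𝓑ᵀ 𝓑 0).mulVec x
          = ρ • x} =
      {1, (1 + Real.sqrt 5) / 2, (1 - Real.sqrt 5) / 2} := by
  have hA' : IsUnit A.det := (isUnit_iff_isUnit_det A).mp hA.isUnit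
  have hS : IsUnit (𝓑 * A⁻¹ * 𝓑ᵀ).det := (isUnit_iff_isUnit_det _).mp
    (hA.mul_inv_mul_transpose (by rwa [Fintype.card_fin])).isUnit
  have hP : IsUnit (fromBlocks A 0 0 (𝓑 * A⁻¹ * 𝓑ᵀ)).det := by
    rw [det_fromBlocks_zero₂₁]
    exact hA'.mul hS
  have : Nonempty (Fin m) := ⟨⟨0, hm⟩⟩
  simp_rw [inv_mul_mulVec_eq_smul_iff hP]
  rw [setOf_saddlePoint_eigen_eq hA' hS
    (𝓑.exists_mulVec_eq_zero_of_card_lt (by simpa using hnm)), Real.setOf_sq_eq_add_one]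
end
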